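/- arXiv:1706.00147 — 2 statements merged into one kernel-verified Lean document; each statement's English description precedes it below -/
import Mathlib

section
/- Let n ≥ 1, let 0 < α < β < 1, and set k := 2αβ/(β−α). Suppose f : ℝⁿ → ℝ is bounded, globally β-Hölder continuous (there is A > 0 with |f(x)−f(y)| ≤ A|x−y|^β for all x,y ∈ ℝⁿ), and satisfies |f(x)| ≤ A|x|^{−k} for all |x| ≥ 1. Then the function g defined on ℝⁿ∖{0} by g(x) := f(x/|x|²), extended by g(0) := 0, is α-Hölder continuous on a neighborhood of the origin: there exist r > 0 and L > 0 such that |g(x) − g(y)| ≤ L|x−y|^α for all x, y in the closed ball of radius r centered at 0. -/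
open Metric

/-!
Spherical inversion turns points near the origin into points far out, and
`‖x/‖x‖² - y/‖y‖²‖ = ‖x - y‖ / (‖x‖ ‖y‖)`. Let `‖x‖ ≤ ‖y‖` and `t = 2β/(β - α)`, so `k = tα`.
If `‖x - y‖ ≤ ‖x‖^t`, the `β`-Hölder bound of `f` at the inverted points is already at most
`A ‖x - y‖^α`. Otherwise `‖x‖` and `‖y‖` are both `O(‖x - y‖^{1/t})`, and the decay of `f` at
infinity bounds `|g x|` and `|g y|` separately by `O(‖x‖^k + ‖y‖^k) = O(‖x - y‖^α)`.
-/

section Inversion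

variable {E : Type*} [NormedAddCommGroup E]

theorem norm_inv_norm_sq_smul [NormedSpace ℝ E] (x : E) : ‖(‖x‖ ^ 2)⁻¹ • x‖ = ‖x‖⁻¹ := by
  rw [norm_smul, norm_inv, norm_pow, norm_norm]
  rcases eq_or_ne ‖x‖ 0 with hx | hx
  · simp [hx]
  · field_simp

theorem norm_inv_norm_sq_smul_sub [InnerProductSpace ℝ E] {x y : E} (hx : x ≠ 0) (hy : y ≠ 0) :
    ‖(‖x‖ ^ 2)⁻¹ • x - (‖y‖ ^ 2)⁻¹ • y‖ = ‖x - y‖ / (‖x‖ * ‖y‖) := by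
  have h := dist_div_norm_sq_smul hx hy 1
  simp only [one_div, inv_pow, one_pow, dist_eq_norm] at h
  rw [h, inv_mul_eq_div]

variable {f g : E → ℝ} {A : ℝ}

theorem abs_le_of_decay_of_eq_comp_inversion [NormedSpace ℝ E] {k : ℝ} (hA : 0 ≤ A)
    (hdecay : ∀ x, 1 ≤ ‖x‖ → |f x| ≤ A * ‖x‖ ^ (-k)) (hg0 : g 0 = 0)
    (hg : ∀ x, x ≠ 0 → g x = f ((‖x‖ ^ 2)⁻¹ • x)) {x : E} (hx : ‖x‖ ≤ 1) :
    |g x| ≤ A * ‖x‖ ^ k := by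
  rcases eq_or_ne x 0 with rfl | hx0
  · rw [hg0, abs_zero]
    positivity
  have hxpos : 0 < ‖x‖ := norm_pos_iff.2 hx0
  have hinv := hdecay _ ((norm_inv_norm_sq_smul x).symm ▸ (one_le_inv₀ hxpos).2 hx)
  rwa [← hg x hx0, norm_inv_norm_sq_smul, Real.inv_rpow hxpos.le, Real.rpow_neg hxpos.le,
    inv_inv] at hinv

theorem abs_sub_le_of_holder_of_eq_comp_inversion [InnerProductSpace ℝ E] {β : ℝ}
    (hHolder : ∀ x y, |f x - f y| ≤ A * ‖x - y‖ ^ β)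
    (hg : ∀ x, x ≠ 0 → g x = f ((‖x‖ ^ 2)⁻¹ • x)) {x y : E} (hx : x ≠ 0) (hy : y ≠ 0) :
    |g x - g y| ≤ A * (‖x - y‖ / (‖x‖ * ‖y‖)) ^ β := by
  rw [hg x hx, hg y hy, ← norm_inv_norm_sq_smul_sub hx hy]
  exact hHolder _ _

end Inversion

section Exponents

open Real

variable {a b d t α β : ℝ}

theorem div_mul_rpow_le_rpow_of_le_rpow (hβ : 0 < β) (hαβ : α ≤ β) (ht : t * (β - α) = 2 * β)
    (hd : 0 ≤ d) (ha : 0 < a) (hab : a ≤ b) (hda : d ≤ a ^ t) :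
    (d / (a * b)) ^ β ≤ d ^ α := by
  have hβα : 0 ≤ β - α := sub_nonneg.2 hαβ
  calc (d / (a * b)) ^ β ≤ (d / (a * a)) ^ β := by
        gcongr
        exact div_nonneg hd (mul_nonneg ha.le (ha.le.trans hab))
    _ = d ^ α * d ^ (β - α) / (a * a) ^ β := by
        rw [div_rpow hd (by positivity), ← rpow_add' hd (by linarith), add_sub_cancel]
    _ ≤ d ^ α * (a ^ t) ^ (β - α) / (a * a) ^ β := by gcongr
    _ = d ^ α := by
        have haβ := rpow_pos_of_pos ha β
        rw [← rpow_mul ha.le, ht, two_mul, rpow_add ha, mul_rpow ha.le ha.le,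
          mul_div_cancel_right₀ _ (mul_pos haβ haβ).ne']

theorem rpow_add_rpow_le_of_rpow_le (hα : 0 ≤ α) (ht : 1 ≤ t) (ha : 0 ≤ a) (hb : 0 ≤ b)
    (had : a ^ t ≤ d) (hd : d ≤ 1) (hbad : b ≤ a + d) :
    a ^ (t * α) + b ^ (t * α) ≤ (1 + 2 ^ (t * α)) * d ^ α := by
  have hd0 : 0 ≤ d := (rpow_nonneg ha t).trans had
  have ht0 : 0 < t := one_pos.trans_le ht
  have ha_le : a ≤ d ^ t⁻¹ := (le_rpow_inv_iff_of_pos ha hd0 ht0).2 had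
  have hd_le : d ≤ d ^ t⁻¹ := self_le_rpow_of_le_one hd0 hd (inv_le_one_of_one_le₀ ht)
  have hb_le : b ≤ 2 * d ^ t⁻¹ := by linarith
  have hdt : (d ^ t⁻¹) ^ (t * α) = d ^ α := by
    rw [← rpow_mul hd0, inv_mul_cancel_left₀ ht0.ne']
  have hαt : 0 ≤ t * α := by positivity
  calc a ^ (t * α) + b ^ (t * α) ≤ (d ^ t⁻¹) ^ (t * α) + (2 * d ^ t⁻¹) ^ (t * α) := by
        gcongr
    _ = (1 + 2 ^ (t * α)) * d ^ α := by
        rw [mul_rpow zero_le_two (by positivity), hdt]; ring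

end Exponents

open Real in
theorem abs_sub_le_of_decay_of_inversion_holder {E : Type*} [NormedAddCommGroup E]
    {h : E → ℝ} {A α β : ℝ} (hA : 0 ≤ A) (hα : 0 < α) (hαβ : α < β)
    (hdecay : ∀ x, ‖x‖ ≤ 1 → |h x| ≤ A * ‖x‖ ^ (2 * α * β / (β - α)))
    (hholder : ∀ x y, x ≠ 0 → y ≠ 0 → |h x - h y| ≤ A * (‖x - y‖ / (‖x‖ * ‖y‖)) ^ β)
    {x y : E} (hx : ‖x‖ ≤ 1 / 2) (hy : ‖y‖ ≤ 1 / 2) :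
    |h x - h y| ≤ A * (1 + 2 ^ (2 * α * β / (β - α))) * ‖x - y‖ ^ α := by
  wlog hxy : ‖x‖ ≤ ‖y‖ generalizing x y
  · rw [abs_sub_comm, norm_sub_rev]
    exact this hy hx (le_of_not_ge hxy)
  have hβα : 0 < β - α := sub_pos.2 hαβ
  set t := 2 * β / (β - α)
  have ht : t * (β - α) = 2 * β := div_mul_cancel₀ _ hβα.ne'
  have ht1 : 1 ≤ t := by rw [le_div_iff₀ hβα]; linarith
  have hk : 2 * α * β / (β - α) = t * α := by ring
  rw [hk] at hdecay ⊢
  rcases lt_or_ge ‖x - y‖ (‖x‖ ^ t) with hclose | hfar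
  · have hxpos : 0 < ‖x‖ := by
      refine (norm_nonneg x).lt_of_ne fun h0 => ?_
      rw [← h0, zero_rpow (by positivity)] at hclose
      exact (norm_nonneg _).not_gt hclose
    have hypos := hxpos.trans_le hxy
    calc |h x - h y| ≤ A * (‖x - y‖ / (‖x‖ * ‖y‖)) ^ β :=
          hholder x y (norm_pos_iff.1 hxpos) (norm_pos_iff.1 hypos)
      _ ≤ A * ‖x - y‖ ^ α := by
          gcongr
          exact div_mul_rpow_le_rpow_of_le_rpow (hα.trans hαβ) hαβ.le ht (norm_nonneg _) hxpos
            hxy hclose.le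
      _ ≤ A * (1 + 2 ^ (t * α)) * ‖x - y‖ ^ α := by
          gcongr
          exact le_mul_of_one_le_right hA (le_add_of_nonneg_right (by positivity))
  · have hd1 : ‖x - y‖ ≤ 1 := by linarith [norm_sub_le x y]
    have hyxd : ‖y‖ ≤ ‖x‖ + ‖x - y‖ := by linarith [norm_sub_norm_le y x, norm_sub_rev x y]
    calc |h x - h y| ≤ |h x| + |h y| := abs_sub _ _
      _ ≤ A * (‖x‖ ^ (t * α) + ‖y‖ ^ (t * α)) := by
          rw [mul_add]
          exact add_le_add (hdecay x (by linarith)) (hdecay y (by linarith))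
      _ ≤ A * ((1 + 2 ^ (t * α)) * ‖x - y‖ ^ α) := by
          gcongr
          exact rpow_add_rpow_le_of_rpow_le hα.le ht1 (norm_nonneg _) (norm_nonneg _) hfar hd1 hyxd
      _ = A * (1 + 2 ^ (t * α)) * ‖x - y‖ ^ α := (mul_assoc _ _ _).symm

theorem holder_regularity_under_inversion_general
    (n : ℕ) (α β k : ℝ)
    (hα : 0 < α) (hαβ : α < β)
    (hk : k = 2 * α * β / (β - α))
    (f : EuclideanSpace ℝ (Fin n) → ℝ) (A : ℝ) (hA : 0 < A)
    (hHolder : ∀ x y, |f x - f y| ≤ A * ‖x - y‖ ^ β)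
    (hdecay : ∀ x, 1 ≤ ‖x‖ → |f x| ≤ A * ‖x‖ ^ (-k))
    (g : EuclideanSpace ℝ (Fin n) → ℝ)
    (hg0 : g 0 = 0)
    (hg : ∀ x, x ≠ 0 → g x = f ((‖x‖ ^ 2)⁻¹ • x)) :
    ∃ r > (0 : ℝ), ∃ L > (0 : ℝ),
      ∀ x ∈ closedBall (0 : EuclideanSpace ℝ (Fin n)) r,
        ∀ y ∈ closedBall (0 : EuclideanSpace ℝ (Fin n)) r,
          |g x - g y| ≤ L * ‖x - y‖ ^ α := by
  subst hk
  refine ⟨1 / 2, by norm_num, A * (1 + 2 ^ (2 * α * β / (β - α))), by positivity, ?_⟩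
  intro x hx y hy
  rw [mem_closedBall, dist_zero_right] at hx hy
  exact abs_sub_le_of_decay_of_inversion_holder hA.le hα hαβ
    (fun _ hx => abs_le_of_decay_of_eq_comp_inversion hA.le hdecay hg0 hg hx)
    (fun _ _ hx hy => abs_sub_le_of_holder_of_eq_comp_inversion hHolder hg hx hy) hx hy

/-- **Hölder regularity under inversion.**  If `f : ℝⁿ → ℝ` is bounded, globally
`β`-Hölder, and decays like `|x|^{-k}` with `k = 2αβ/(β-α)`, then the spherical
inversion `g(x) = f(x/|x|²)` (with `g 0 = 0`) is `α`-Hölder near the origin. -/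
theorem holder_regularity_under_inversion
    (n : ℕ) (hn : 1 ≤ n) (α β k : ℝ)
    (hα : 0 < α) (hαβ : α < β) (hβ : β < 1)
    (hk : k = 2 * α * β / (β - α))
    (f : EuclideanSpace ℝ (Fin n) → ℝ) (A : ℝ) (hA : 0 < A)
    (hbdd : ∀ x, |f x| ≤ A)
    (hHolder : ∀ x y, |f x - f y| ≤ A * ‖x - y‖ ^ β)
    (hdecay : ∀ x, 1 ≤ ‖x‖ → |f x| ≤ A * ‖x‖ ^ (-k))
    (g : EuclideanSpace ℝ (Fin n) → ℝ)
    (hg0 : g 0 = 0)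
    (hg : ∀ x, x ≠ 0 → g x = f ((‖x‖ ^ 2)⁻¹ • x)) :
    ∃ r > (0 : ℝ), ∃ L > (0 : ℝ),
      ∀ x ∈ closedBall (0 : EuclideanSpace ℝ (Fin n)) r,
        ∀ y ∈ closedBall (0 : EuclideanSpace ℝ (Fin n)) r,
          |g x - g y| ≤ L * ‖x - y‖ ^ α :=
  holder_regularity_under_inversion_general n α β k hα hαβ hk f A hA hHolder hdecay g hg0 hg
end

section
/- Let n ≥ 1, let U ⊆ ℝⁿ be measurable, let 1 < p ≤ ∞ with conjugate exponent q (1/p + 1/q = 1, so q = 1 when p = ∞), and let s > 0 satisfy qs < n. Then there is a constant C depending only on n, p, q, s such that for every ω ∈ L¹(U) ∩ L^p(U): sup over x ∈ ℝⁿ of ∫_U |ω(y)|/|x−y|^s dy ≤ C · ‖ω‖_{L^p(U)}^{qs/n} · ‖ω‖_{L¹(U)}^{(n−qs)/n}. -/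
/-! On the ball `B(x, R)`, Hölder's inequality bounds the potential by
`‖ω‖_p ‖|x - ·|^(-s)‖_{L^q(B(x, R))} = ‖ω‖_p (K R^(n - qs))^(1/q)`, where by scaling `K` is the
integral of `|w|^(-qs)` over the unit ball, finite because `qs < n`; off the ball it is at most
`R^(-s) ‖ω‖_1`. The radius `R = (‖ω‖_1 / ‖ω‖_p)^(q/n)` balances the two terms. -/

open MeasureTheory ENNReal Metric Set Module

theorem Real.mul_div_rpow_eq {a b : ℝ} (ha : 0 < a) (hb : 0 ≤ b) (t : ℝ) :
    a * (b / a) ^ t = a ^ (1 - t) * b ^ t := by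
  rw [Real.div_rpow hb ha.le, Real.rpow_sub ha, Real.rpow_one]
  field_simp

theorem add_eq_at_balanced_radius {A B K q s d : ℝ} (hA : 0 < A) (hB : 0 < B) (hK : 0 ≤ K)
    (hq : 0 < q) (hd : 0 < d) :
    B * (((A / B) ^ (q / d)) ^ (d - q * s) * K) ^ (1 / q) + ((A / B) ^ (q / d)) ^ (-s) * A =
      (K ^ (1 / q) + 1) * B ^ (q * s / d) * A ^ ((d - q * s) / d) := by
  have hAB : 0 ≤ A / B := by positivity
  have near : B * ((A / B) ^ (q / d)) ^ ((d - q * s) * (1 / q)) =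
      B ^ (q * s / d) * A ^ ((d - q * s) / d) := by
    rw [← Real.rpow_mul hAB, Real.mul_div_rpow_eq hB hA.le]
    congr 2
    · field_simp
      ring
    · field_simp
  have far : ((A / B) ^ (q / d)) ^ (-s) * A = B ^ (q * s / d) * A ^ ((d - q * s) / d) := by
    rw [← Real.rpow_mul hAB, show q / d * -s = -(q * s / d) by ring, Real.rpow_neg hAB,
      ← Real.inv_rpow hAB, inv_div, mul_comm, Real.mul_div_rpow_eq hA hB.le, mul_comm]
    congr 2
    field_simp
  rw [Real.mul_rpow (by positivity) hK, ← Real.rpow_mul (by positivity)]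
  linear_combination K ^ (1 / q) * near + far

section NearAndFar

variable {E : Type*} [SeminormedAddCommGroup E] [MeasurableSpace E] [OpensMeasurableSpace E]
  {ν : Measure E}

theorem setLIntegral_compl_ball_div_norm_sub_rpow_le {s : ℝ} (hs : 0 ≤ s) (ω : E → ℝ) (x : E)
    {R : ℝ} (hR : 0 < R) :
    ∫⁻ y in (ball x R)ᶜ, ENNReal.ofReal (|ω y| / ‖x - y‖ ^ s) ∂ν ≤
      ENNReal.ofReal (R ^ (-s)) * ∫⁻ y, ENNReal.ofReal |ω y| ∂ν := by
  have hpt : ∀ y ∈ (ball x R)ᶜ,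
      ENNReal.ofReal (|ω y| / ‖x - y‖ ^ s) ≤ ENNReal.ofReal (R ^ (-s)) * ENNReal.ofReal |ω y| := by
    intro y hy
    rw [mem_compl_iff, mem_ball', not_lt, dist_eq_norm] at hy
    rw [div_eq_mul_inv, ← Real.rpow_neg (norm_nonneg _), ← ENNReal.ofReal_mul (by positivity),
      mul_comm (R ^ (-s))]
    exact ofReal_le_ofReal (mul_le_mul_of_nonneg_left
      (Real.rpow_le_rpow_of_nonpos hR hy (neg_nonpos.2 hs)) (abs_nonneg _))
  calc ∫⁻ y in (ball x R)ᶜ, ENNReal.ofReal (|ω y| / ‖x - y‖ ^ s) ∂ν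
      ≤ ∫⁻ y in (ball x R)ᶜ, ENNReal.ofReal (R ^ (-s)) * ENNReal.ofReal |ω y| ∂ν :=
        setLIntegral_mono' measurableSet_ball.compl hpt
    _ = ENNReal.ofReal (R ^ (-s)) * ∫⁻ y in (ball x R)ᶜ, ENNReal.ofReal |ω y| ∂ν :=
        lintegral_const_mul' _ _ ofReal_ne_top
    _ ≤ ENNReal.ofReal (R ^ (-s)) * ∫⁻ y, ENNReal.ofReal |ω y| ∂ν := by
        gcongr
        exact Measure.restrict_le_self

variable {μ : Measure E} {p : ℝ≥0∞} {q : ℝ} [p.HolderConjugate (ENNReal.ofReal q)]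

theorem setLIntegral_ball_div_norm_sub_rpow_le (hν : ν ≤ μ) (s : ℝ) {ω : E → ℝ}
    (hω : AEStronglyMeasurable ω ν) (x : E) (R : ℝ) :
    ∫⁻ y in ball x R, ENNReal.ofReal (|ω y| / ‖x - y‖ ^ s) ∂ν ≤
      eLpNorm ω p ν * (∫⁻ y in ball x R, ENNReal.ofReal (‖x - y‖ ^ (-(q * s))) ∂μ) ^ (1 / q) := by
  have hq : 0 < q := ENNReal.ofReal_pos.1 (HolderConjugate.pos _ p)
  set g : E → ℝ := fun y => ‖x - y‖ ^ (-s)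
  have hg : Measurable g := (continuous_const.sub continuous_id).norm.measurable.pow_const _
  have hg_nonneg : ∀ y, 0 ≤ g y := fun y => Real.rpow_nonneg (norm_nonneg _) _
  calc ∫⁻ y in ball x R, ENNReal.ofReal (|ω y| / ‖x - y‖ ^ s) ∂ν
      = eLpNorm (fun y => ω y * g y) 1 (ν.restrict (ball x R)) := by
        rw [eLpNorm_one_eq_lintegral_enorm]
        refine lintegral_congr fun y => ?_
        rw [Real.enorm_eq_ofReal_abs, abs_mul, abs_of_nonneg (hg_nonneg y), div_eq_mul_inv,
          ← Real.rpow_neg (norm_nonneg _)]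
    _ ≤ eLpNorm ω p (ν.restrict (ball x R)) *
          eLpNorm g (ENNReal.ofReal q) (ν.restrict (ball x R)) := by
        simpa using eLpNorm_le_eLpNorm_mul_eLpNorm_of_nnnorm hω.restrict hg.aestronglyMeasurable
          (fun a b : ℝ => a * b) 1 (ae_of_all _ fun y => by simp [nnnorm_mul])
    _ ≤ eLpNorm ω p ν * eLpNorm g (ENNReal.ofReal q) (μ.restrict (ball x R)) := by
        gcongr
        exact Measure.restrict_le_self
    _ = _ := by
        rw [eLpNorm_eq_lintegral_rpow_enorm_toReal (ENNReal.ofReal_pos.2 hq).ne' ofReal_ne_top,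
          toReal_ofReal hq.le]
        congr 2
        refine lintegral_congr fun y => ?_
        rw [Real.enorm_of_nonneg (hg_nonneg y), ofReal_rpow_of_nonneg (hg_nonneg y) hq.le,
          ← Real.rpow_mul (norm_nonneg _), neg_mul, mul_comm]

end NearAndFar

section Haar

variable {E : Type*} [NormedAddCommGroup E] [NormedSpace ℝ E] [FiniteDimensional ℝ E]
  [MeasurableSpace E] [BorelSpace E] (μ : Measure E) [μ.IsAddHaarMeasure]

theorem map_add_smul_addHaar (x : E) {R : ℝ} (hR : 0 < R) :
    μ.map (fun w => x + R • w) = ENNReal.ofReal (R ^ finrank ℝ E)⁻¹ • μ := by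
  have : (fun w : E => x + R • w) = (x + ·) ∘ (R • ·) := rfl
  rw [this, ← Measure.map_map (measurable_const_add x) (measurable_const_smul R),
    Measure.map_addHaar_smul μ hR.ne', Measure.map_smul, map_add_left_eq_self,
    abs_of_pos (by positivity)]

theorem setLIntegral_ball_eq_mul_setLIntegral_unitBall {f : E → ℝ≥0∞} (hf : Measurable f) (x : E)
    {R : ℝ} (hR : 0 < R) :
    ∫⁻ y in ball x R, f y ∂μ =
      ENNReal.ofReal (R ^ finrank ℝ E) * ∫⁻ w in ball 0 1, f (x + R • w) ∂μ := by
  have hpre : (fun w : E => x + R • w) ⁻¹' ball x R = ball 0 1 := by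
    ext w
    simp [dist_eq_norm, norm_smul, abs_of_pos hR, hR]
  have hRd : (0 : ℝ) < R ^ finrank ℝ E := by positivity
  rw [← hpre, ← setLIntegral_map measurableSet_ball hf (by fun_prop), map_add_smul_addHaar μ x hR,
    Measure.restrict_smul, lintegral_smul_measure, smul_eq_mul, ← mul_assoc,
    ← ofReal_mul hRd.le, mul_inv_cancel₀ hRd.ne', ofReal_one, one_mul]

theorem setLIntegral_ball_norm_sub_rpow (x : E) {R : ℝ} (hR : 0 < R) (t : ℝ) :
    ∫⁻ y in ball x R, ENNReal.ofReal (‖x - y‖ ^ t) ∂μ =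
      ENNReal.ofReal (R ^ (finrank ℝ E + t)) * ∫⁻ w in ball 0 1, ENNReal.ofReal (‖w‖ ^ t) ∂μ := by
  rw [setLIntegral_ball_eq_mul_setLIntegral_unitBall μ
    (f := fun y => ENNReal.ofReal (‖x - y‖ ^ t)) (by fun_prop) x hR]
  simp_rw [sub_add_cancel_left, norm_neg, norm_smul, Real.norm_of_nonneg hR.le,
    Real.mul_rpow hR.le (norm_nonneg _), ENNReal.ofReal_mul (Real.rpow_nonneg hR.le _)]
  rw [lintegral_const_mul' _ _ ofReal_ne_top, ← mul_assoc, ← ENNReal.ofReal_mul (by positivity),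
    Real.rpow_add hR, Real.rpow_natCast]

theorem setLIntegral_unitBall_norm_rpow_lt_top (hd : 1 ≤ finrank ℝ E) {t : ℝ}
    (ht : -(finrank ℝ E : ℝ) < t) :
    ∫⁻ w in ball (0 : E) 1, ENNReal.ofReal (‖w‖ ^ t) ∂μ < ∞ := by
  refine Integrable.lintegral_lt_top
    (integrableOn_ball_of_norm_le_rpow (C := 1) (α := -t) hd (by linarith) ?_
    (measurable_norm.pow_const t).aestronglyMeasurable)
  exact ae_of_all _ fun w => by simp [abs_of_nonneg (Real.rpow_nonneg (norm_nonneg w) t)]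

variable {μ} {ν : Measure E} {p : ℝ≥0∞} {q : ℝ} [p.HolderConjugate (ENNReal.ofReal q)]

theorem lintegral_div_norm_sub_rpow_le (hν : ν ≤ μ) {s : ℝ} (hs : 0 ≤ s) {ω : E → ℝ}
    (hω : AEStronglyMeasurable ω ν) (x : E) {R : ℝ} (hR : 0 < R) :
    ∫⁻ y, ENNReal.ofReal (|ω y| / ‖x - y‖ ^ s) ∂ν ≤
      eLpNorm ω p ν * (ENNReal.ofReal (R ^ (finrank ℝ E - q * s)) *
          ∫⁻ w in ball 0 1, ENNReal.ofReal (‖w‖ ^ (-(q * s))) ∂μ) ^ (1 / q) +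
        ENNReal.ofReal (R ^ (-s)) * ∫⁻ y, ENNReal.ofReal |ω y| ∂ν := by
  rw [← lintegral_add_compl _ (measurableSet_ball (x := x) (ε := R)),
    sub_eq_add_neg (finrank ℝ E : ℝ), ← setLIntegral_ball_norm_sub_rpow μ x hR]
  exact add_le_add (setLIntegral_ball_div_norm_sub_rpow_le hν s hω x R)
    (setLIntegral_compl_ball_div_norm_sub_rpow_le hs ω x hR)

theorem lintegral_div_norm_sub_rpow_le_interpolation (hν : ν ≤ μ) {s : ℝ} (hs : 0 < s)
    (hqs : q * s < finrank ℝ E) {ω : E → ℝ} (hω₁ : Integrable ω ν) (hωp : MemLp ω p ν) (x : E) :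
    ∫⁻ y, ENNReal.ofReal (|ω y| / ‖x - y‖ ^ s) ∂ν ≤
      ENNReal.ofReal
        (((∫⁻ w in ball 0 1, ENNReal.ofReal (‖w‖ ^ (-(q * s))) ∂μ).toReal ^ (1 / q) + 1) *
          (eLpNorm ω p ν).toReal ^ (q * s / finrank ℝ E) *
          (∫ y, |ω y| ∂ν) ^ ((finrank ℝ E - q * s) / finrank ℝ E)) := by
  by_cases h0 : ω =ᵐ[ν] 0
  · rw [lintegral_congr_ae (g := 0) (h0.mono fun y hy => by simp [hy]), lintegral_zero_fun]
    exact zero_le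
  have hq : 0 < q := ENNReal.ofReal_pos.1 (HolderConjugate.pos _ p)
  have hd : (0 : ℝ) < finrank ℝ E := (mul_pos hq hs).trans hqs
  set K := ∫⁻ w in ball 0 1, ENNReal.ofReal (‖w‖ ^ (-(q * s))) ∂μ
  set A := ∫ y, |ω y| ∂ν
  set B := (eLpNorm ω p ν).toReal
  have hK : K ≠ ∞ := (setLIntegral_unitBall_norm_rpow_lt_top μ (by exact_mod_cast hd)
    (by linarith)).ne
  have hA_eq : ∫⁻ y, ENNReal.ofReal |ω y| ∂ν = ENNReal.ofReal A :=
    (ofReal_integral_eq_lintegral_ofReal hω₁.abs (ae_of_all _ fun y => abs_nonneg _)).symm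
  have hA : 0 < A := by
    refine (integral_nonneg fun y => abs_nonneg _).lt_of_ne' fun h => h0 ?_
    exact ((integral_eq_zero_iff_of_nonneg (fun y => abs_nonneg _) hω₁.abs).1 h).mono
      fun y hy => abs_eq_zero.1 hy
  have hB : 0 < B := toReal_pos (fun h => h0 ((eLpNorm_eq_zero_iff hωp.1
    (HolderConjugate.ne_zero p (ENNReal.ofReal q))).1 h)) hωp.2.ne
  set R := (A / B) ^ (q / finrank ℝ E)
  have hR : 0 < R := by positivity
  calc ∫⁻ y, ENNReal.ofReal (|ω y| / ‖x - y‖ ^ s) ∂ν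
      ≤ eLpNorm ω p ν * (ENNReal.ofReal (R ^ (finrank ℝ E - q * s)) * K) ^ (1 / q) +
          ENNReal.ofReal (R ^ (-s)) * ∫⁻ y, ENNReal.ofReal |ω y| ∂ν :=
        lintegral_div_norm_sub_rpow_le (q := q) hν hs.le hωp.1 x hR
    _ = ENNReal.ofReal (B * (R ^ (finrank ℝ E - q * s) * K.toReal) ^ (1 / q) + R ^ (-s) * A) := by
        rw [ofReal_add (by positivity) (by positivity), ofReal_mul (by positivity),
          ofReal_mul (by positivity),
          ← ofReal_rpow_of_nonneg (x := R ^ _ * K.toReal) (by positivity) (by positivity),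
          ofReal_mul (by positivity), ofReal_toReal hK, ofReal_toReal hωp.2.ne, hA_eq]
    _ = _ := by rw [add_eq_at_balanced_radius hA hB toReal_nonneg hq hd]

end Haar

theorem riesz_potential_interpolation_estimate_general
    (n : ℕ)
    (U : Set (EuclideanSpace ℝ (Fin n)))
    (p : ℝ≥0∞) (q s : ℝ)
    (hpq : 1 / p + 1 / ENNReal.ofReal q = 1)
    (hs : 0 < s) (hqs : q * s < n) :
    ∃ C > (0 : ℝ),
      ∀ ω : EuclideanSpace ℝ (Fin n) → ℝ,
        IntegrableOn ω U volume →
        MemLp ω p (volume.restrict U) →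
        ∀ x : EuclideanSpace ℝ (Fin n),
          (∫⁻ y in U, ENNReal.ofReal (|ω y| / ‖x - y‖ ^ s))
            ≤ ENNReal.ofReal
                (C * (eLpNorm ω p (volume.restrict U)).toReal ^ (q * s / n)
                   * (∫ y in U, |ω y|) ^ ((n - q * s) / n)) := by
  have : p.HolderConjugate (ENNReal.ofReal q) :=
    holderConjugate_iff.2 (by simpa only [one_div] using hpq)
  have hdim : (finrank ℝ (EuclideanSpace ℝ (Fin n)) : ℝ) = n := by simp
  refine ⟨(∫⁻ w in ball (0 : EuclideanSpace ℝ (Fin n)) 1,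
    ENNReal.ofReal (‖w‖ ^ (-(q * s)))).toReal ^ (1 / q) + 1, by positivity, ?_⟩
  intro ω hω₁ hωp x
  simpa only [hdim] using lintegral_div_norm_sub_rpow_le_interpolation (μ := volume)
    Measure.restrict_le_self hs (by rwa [hdim]) hω₁ hωp x

/-- **Riesz-potential estimate.**  For `1 < p ≤ ∞` with conjugate exponent `q`
(`1/p + 1/q = 1`) and `0 < s` with `q s < n`, there is a constant `C = C(n,p,q,s)`
such that for every `ω ∈ L¹(U) ∩ Lᵖ(U)`,
`sup_x ∫_U |ω(y)|/|x-y|^s dy ≤ C ‖ω‖_{Lᵖ(U)}^{qs/n} ‖ω‖_{L¹(U)}^{(n-qs)/n}`. -/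
theorem riesz_potential_interpolation_estimate
    (n : ℕ) (hn : 1 ≤ n)
    (U : Set (EuclideanSpace ℝ (Fin n))) (hU : MeasurableSet U)
    (p : ℝ≥0∞) (hp : 1 < p) (q s : ℝ) (hq : 1 ≤ q)
    (hpq : 1 / p + 1 / ENNReal.ofReal q = 1)
    (hs : 0 < s) (hqs : q * s < n) :
    ∃ C > (0 : ℝ),
      ∀ ω : EuclideanSpace ℝ (Fin n) → ℝ,
        IntegrableOn ω U volume →
        MemLp ω p (volume.restrict U) →
        ∀ x : EuclideanSpace ℝ (Fin n),
          (∫⁻ y in U, ENNReal.ofReal (|ω y| / ‖x - y‖ ^ s))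
            ≤ ENNReal.ofReal
                (C * (eLpNorm ω p (volume.restrict U)).toReal ^ (q * s / n)
                   * (∫ y in U, |ω y|) ^ ((n - q * s) / n)) :=
  riesz_potential_interpolation_estimate_general n U p q s hpq hs hqs
end
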